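/- arXiv:1606.03814 — 4 statements merged into one kernel-verified Lean document; each statement's English description precedes it below -/
import Mathlib

section
/- Let Σ̂ be a p×p real symmetric matrix with eigenvalues ŷ₁ ≤ ⋯ ≤ ŷ_p, let ε > ŷ₁, and for μ ≥ ε set α* = (μ-ε)/(μ-ŷ₁) and Φ(Σ̂) = α*Σ̂ + (1-α*)μI. Then ‖Φ(Σ̂) - Σ̂‖₂ ≥ ε - ŷ₁ for all μ ≥ ε, where ‖·‖₂ is the spectral norm, and equality holds whenever μ ≥ max(ε, (ŷ_p + ŷ₁)/2). -/
/-!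
With `c = (ε - γ₁) / (μ - γ₁)` one has `Φ(S) - S = c • (μ • 1 - S)`. For self-adjoint `S` the
operator norm of `μ • 1 - S = cfc (μ - ·) S` is `max |μ - γᵢ|` over the spectrum, which is at least
`μ - γ₁` and equals it as soon as the spectrum `[γ₁, γₚ]` lies in `[γ₁, 2μ - γ₁]`.
-/

open Matrix
open scoped Matrix.Norms.L2Operator

section

variable {A : Type*} [NormedRing A] [StarRing A] [NormedAlgebra ℝ A]
  [IsometricContinuousFunctionalCalculus ℝ A IsSelfAdjoint]

lemma cfc_const_sub_id (μ : ℝ) {a : A} (ha : IsSelfAdjoint a) :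
    cfc (fun x : ℝ ↦ μ - x) a = algebraMap ℝ A μ - a := by
  rw [cfc_sub _ _ a, cfc_const μ a, cfc_id' ℝ a]

lemma abs_sub_le_norm_algebraMap_sub_of_mem_spectrum (μ : ℝ) {a : A} (ha : IsSelfAdjoint a)
    {x : ℝ} (hx : x ∈ spectrum ℝ a) : |μ - x| ≤ ‖algebraMap ℝ A μ - a‖ := by
  rw [← cfc_const_sub_id μ ha]
  exact norm_apply_le_norm_cfc (fun x : ℝ ↦ μ - x) a hx

lemma norm_algebraMap_sub_le_of_spectrum_subset_Icc (μ : ℝ) {a : A} (ha : IsSelfAdjoint a)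
    {lo hi : ℝ} (hspec : spectrum ℝ a ⊆ Set.Icc lo hi) (hlo : lo ≤ μ) (hmid : lo + hi ≤ 2 * μ) :
    ‖algebraMap ℝ A μ - a‖ ≤ μ - lo := by
  rw [← cfc_const_sub_id μ ha]
  refine norm_cfc_le (by linarith) fun x hx ↦ ?_
  obtain ⟨hlx, hxh⟩ := hspec hx
  rw [Real.norm_eq_abs, abs_le]
  constructor <;> linarith

end

lemma Monotone.range_subset_Icc_zero_last {α : Type*} [Preorder α] {n : ℕ}
    {γ : Fin (n + 1) → α} (hγ : Monotone γ) :
    Set.range γ ⊆ Set.Icc (γ 0) (γ (Fin.last n)) := by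
  rintro _ ⟨i, rfl⟩
  exact ⟨hγ (Fin.zero_le i), hγ (Fin.le_last i)⟩

/-- for a symmetric Σ̂ with ordered eigenvalues γ, ε > γ₁ and μ ≥ ε,
the spectral-norm distance of the FSPD update Φ(Σ̂) = α*Σ̂ + (1-α*)μI from Σ̂
is at least ε - γ₁, with equality whenever μ ≥ max(ε, (γ_p + γ₁)/2). -/
theorem fspd_spectral_distance (n : ℕ) (S : Matrix (Fin (n + 1)) (Fin (n + 1)) ℝ)
    (hS : S.IsHermitian) (γ : Fin (n + 1) → ℝ) (hmono : Monotone γ)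
    (hperm : ∃ σ : Equiv.Perm (Fin (n + 1)), γ = hS.eigenvalues ∘ σ)
    (ε μ : ℝ) (hε : γ 0 < ε) (hμ : ε ≤ μ) :
    ε - γ 0 ≤
      ‖(((μ - ε) / (μ - γ 0)) • S +
        ((1 - (μ - ε) / (μ - γ 0)) * μ) • (1 : Matrix (Fin (n + 1)) (Fin (n + 1)) ℝ)) - S‖ ∧
    (max ε ((γ (Fin.last n) + γ 0) / 2) ≤ μ →
      ‖(((μ - ε) / (μ - γ 0)) • S +
        ((1 - (μ - ε) / (μ - γ 0)) * μ) • (1 : Matrix (Fin (n + 1)) (Fin (n + 1)) ℝ)) - S‖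
        = ε - γ 0) := by
  obtain ⟨σ, hσ⟩ := hperm
  have hspec : spectrum ℝ S = Set.range γ := by
    rw [hS.spectrum_real_eq_range_eigenvalues, hσ, EquivLike.range_comp]
  have hgap : 0 < μ - γ 0 := by linarith
  set c := (ε - γ 0) / (μ - γ 0)
  have hc : 0 < c := div_pos (by linarith) hgap
  have hcgap : c * (μ - γ 0) = ε - γ 0 := div_mul_cancel₀ _ hgap.ne'
  have hshift : (((μ - ε) / (μ - γ 0)) • S + ((1 - (μ - ε) / (μ - γ 0)) * μ) •
      (1 : Matrix (Fin (n + 1)) (Fin (n + 1)) ℝ)) - S = c • (algebraMap ℝ _ μ - S) := by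
    have hα : (μ - ε) / (μ - γ 0) = 1 - c := by
      rw [div_eq_iff hgap.ne']
      linear_combination hcgap
    rw [hα, Algebra.algebraMap_eq_smul_one]
    module
  have hlow : μ - γ 0 ≤ ‖algebraMap ℝ _ μ - S‖ := by
    have hγ₀ : γ 0 ∈ spectrum ℝ S := hspec ▸ Set.mem_range_self 0
    simpa only [abs_of_pos hgap] using
      abs_sub_le_norm_algebraMap_sub_of_mem_spectrum μ hS.isSelfAdjoint hγ₀
  rw [hshift, norm_smul, Real.norm_of_nonneg hc.le, ← hcgap]
  refine ⟨by gcongr, fun hμ' ↦ ?_⟩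
  have hup := norm_algebraMap_sub_le_of_spectrum_subset_Icc μ hS.isSelfAdjoint
    (hspec ▸ hmono.range_subset_Icc_zero_last) (by linarith)
    (by linarith [le_of_max_le_right hμ'])
  rw [le_antisymm hup hlow]
end

section
/- Let A and B be p×p real symmetric matrices with ordered eigenvalues γ₁(A) ≤ ⋯ ≤ γ_p(A) and γ₁(B) ≤ ⋯ ≤ γ_p(B). Then Σᵢ₌₁^p (γᵢ(A) - γᵢ(B))² ≤ tr((A-B)ᵀ(A-B)). -/
/-!
Expanding the square reduces the inequality to `tr (A * B) ≤ ∑ i, γA i * γB i`. Diagonalising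
`A = U diag(λ) Uᵀ` and `B = V diag(μ) Vᵀ` gives `tr (A * B) = λ ⬝ᵥ S *ᵥ μ` with `S = W ⊙ W`
for the orthogonal matrix `W = Uᵀ V`, so `S` is doubly stochastic. By Birkhoff's theorem `S`
is a convex combination of permutation matrices, and on each of them the rearrangement
inequality bounds the bilinear form by the pairing of the two increasingly ordered spectra.
-/

open Matrix

variable {ι : Type*} [Fintype ι] [DecidableEq ι]

theorem Monovary.dotProduct_mulVec_le_of_mem_doublyStochastic {R : Type*} [Field R]
    [LinearOrder R] [IsStrictOrderedRing R] {f g : ι → R} (hfg : Monovary f g)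
    {S : Matrix ι ι R} (hS : S ∈ doublyStochastic R ι) : f ⬝ᵥ S *ᵥ g ≤ f ⬝ᵥ g := by
  rw [← SetLike.mem_coe, doublyStochastic_eq_convexHull_permMatrix] at hS
  have hlin : IsLinearMap R fun M : Matrix ι ι R => f ⬝ᵥ M *ᵥ g :=
    ⟨fun _ _ => by simp [add_mulVec, dotProduct_add], fun _ _ => by simp [smul_mulVec]⟩
  refine convexHull_min ?_ (convex_halfSpace_le hlin _) hS
  rintro _ ⟨σ, rfl⟩
  simpa [permMatrix_mulVec, dotProduct] using hfg.sum_mul_comp_perm_le_sum_mul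

theorem Matrix.hadamard_self_mem_doublyStochastic {W : Matrix ι ι ℝ}
    (hW : W ∈ orthogonalGroup ι ℝ) : W ⊙ W ∈ doublyStochastic ℝ ι := by
  refine mem_doublyStochastic_iff_sum.mpr
    ⟨fun i j => mul_self_nonneg _, fun i => ?_, fun j => ?_⟩
  · simpa [mul_apply] using congr_fun₂ (mem_unitaryGroup_iff.mp hW) i i
  · simpa [mul_apply] using congr_fun₂ (mem_unitaryGroup_iff'.mp hW) j j

section TrivialStar

variable {R : Type*} [CommRing R] [StarRing R] [TrivialStar R]

theorem Matrix.trace_diagonal_mul_mul_diagonal_mul_star (d e : ι → R) (W : Matrix ι ι R) :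
    trace (diagonal d * W * diagonal e * star W) = d ⬝ᵥ (W ⊙ W) *ᵥ e := by
  simp only [trace, diag, mul_apply, diagonal_apply, ite_mul, mul_ite, zero_mul, mul_zero,
    Finset.sum_ite_eq, Finset.sum_ite_eq', Finset.mem_univ, if_true, star_apply, star_trivial,
    dotProduct, mulVec, hadamard_apply, Finset.mul_sum]
  exact Finset.sum_congr rfl fun i _ => Finset.sum_congr rfl fun j _ => by ring

theorem Matrix.trace_conj_diagonal_mul_conj_diagonal (U V : Matrix ι ι R) (d e : ι → R) :
    trace (U * diagonal d * star U * (V * diagonal e * star V)) =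
      d ⬝ᵥ ((star U * V) ⊙ (star U * V)) *ᵥ e := by
  rw [← trace_diagonal_mul_mul_diagonal_mul_star, StarMul.star_mul, star_star]
  simp only [Matrix.mul_assoc]
  rw [Matrix.trace_mul_comm U]
  simp only [Matrix.mul_assoc]

end TrivialStar

namespace Matrix.IsHermitian

variable {A B : Matrix ι ι ℝ}

theorem eq_mul_diagonal_mul_star (hA : A.IsHermitian) :
    A = (hA.eigenvectorUnitary : Matrix ι ι ℝ) * diagonal hA.eigenvalues *
      star (hA.eigenvectorUnitary : Matrix ι ι ℝ) := by
  simpa using hA.spectral_theorem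

theorem trace_mul_self (hA : A.IsHermitian) :
    trace (A * A) = hA.eigenvalues ⬝ᵥ hA.eigenvalues := by
  conv_lhs => rw [hA.eq_mul_diagonal_mul_star]
  rw [trace_conj_diagonal_mul_conj_diagonal, Unitary.coe_star_mul_self, hadamard_one, diag_one,
    diagonal_one', one_mulVec]

theorem exists_mem_doublyStochastic_trace_mul_eq (hA : A.IsHermitian) (hB : B.IsHermitian) :
    ∃ S ∈ doublyStochastic ℝ ι,
      trace (A * B) = hA.eigenvalues ⬝ᵥ S *ᵥ hB.eigenvalues := by
  set U := hA.eigenvectorUnitary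
  set V := hB.eigenvectorUnitary
  refine ⟨_, hadamard_self_mem_doublyStochastic (star U * V).2, ?_⟩
  conv_lhs => rw [hA.eq_mul_diagonal_mul_star, hB.eq_mul_diagonal_mul_star]
  simpa using trace_conj_diagonal_mul_conj_diagonal (U : Matrix ι ι ℝ) V _ _

theorem trace_mul_le_dotProduct_of_monovary (hA : A.IsHermitian) (hB : B.IsHermitian)
    {σ τ : Equiv.Perm ι} (h : Monovary (hA.eigenvalues ∘ σ) (hB.eigenvalues ∘ τ)) :
    trace (A * B) ≤ (hA.eigenvalues ∘ σ) ⬝ᵥ (hB.eigenvalues ∘ τ) := by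
  obtain ⟨S, hS, hAB⟩ := hA.exists_mem_doublyStochastic_trace_mul_eq hB
  have hreindex : hA.eigenvalues ⬝ᵥ S *ᵥ hB.eigenvalues =
      (hA.eigenvalues ∘ σ) ⬝ᵥ S.submatrix σ τ *ᵥ (hB.eigenvalues ∘ τ) := by
    rw [submatrix_mulVec_equiv, Function.comp_assoc, τ.self_comp_symm, Function.comp_id,
      comp_equiv_dotProduct_comp_equiv]
  rw [hAB, hreindex]
  exact h.dotProduct_mulVec_le_of_mem_doublyStochastic
    (reindex_mem_doublyStochastic (e₁ := σ.symm) (e₂ := τ.symm) hS)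

end Matrix.IsHermitian

/-- Wielandt–Hoffman inequality: for symmetric A, B with ordered
eigenvalues γA, γB, Σᵢ (γAᵢ - γBᵢ)² ≤ tr((A-B)ᵀ(A-B)). -/
theorem wielandt_hoffman (n : ℕ) (A B : Matrix (Fin (n + 1)) (Fin (n + 1)) ℝ)
    (hA : A.IsHermitian) (hB : B.IsHermitian)
    (γA γB : Fin (n + 1) → ℝ) (hmonoA : Monotone γA) (hmonoB : Monotone γB)
    (hpermA : ∃ σ : Equiv.Perm (Fin (n + 1)), γA = hA.eigenvalues ∘ σ)
    (hpermB : ∃ σ : Equiv.Perm (Fin (n + 1)), γB = hB.eigenvalues ∘ σ) :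
    ∑ i, (γA i - γB i) ^ 2 ≤ Matrix.trace ((A - B)ᵀ * (A - B)) := by
  obtain ⟨σ, rfl⟩ := hpermA
  obtain ⟨τ, rfl⟩ := hpermB
  set a := hA.eigenvalues ∘ σ
  set b := hB.eigenvalues ∘ τ
  have hAB : trace (A * B) ≤ a ⬝ᵥ b :=
    hA.trace_mul_le_dotProduct_of_monovary hB (hmonoA.monovary hmonoB)
  have hsymm : (A - B)ᵀ = A - B := (isHermitian_iff_isSymm.mp (hA.sub hB)).eq
  calc ∑ i, (a i - b i) ^ 2 = a ⬝ᵥ a + b ⬝ᵥ b - 2 * (a ⬝ᵥ b) := by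
        simp only [dotProduct, Finset.mul_sum, ← Finset.sum_add_distrib,
          ← Finset.sum_sub_distrib]
        exact Finset.sum_congr rfl fun i _ => by ring
    _ ≤ trace (A * A) + trace (B * B) - 2 * trace (A * B) := by
        rw [hA.trace_mul_self, hB.trace_mul_self, comp_equiv_dotProduct_comp_equiv,
          comp_equiv_dotProduct_comp_equiv]
        linarith
    _ = trace ((A - B)ᵀ * (A - B)) := by
        rw [hsymm, sub_mul, mul_sub, mul_sub, trace_sub, trace_sub, trace_sub,
          Matrix.trace_mul_comm B A]
        ring
end

section
/- Let Σ and Σ̂ be p×p real symmetric matrices, Σ with smallest eigenvalue γ₁ > ε > 0, Σ̂ with eigenvalues ŷ₁ ≤ ⋯ ≤ ŷ_p. Define the FSPD update Φ(Σ̂) = α*Σ̂ + (1-α*)μI where α* = 1 if ŷ₁ ≥ ε and α* = (μ-ε)/(μ-ŷ₁) otherwise, with μ ≥ max(ε, (ŷ₁+ŷ_p)/2). Then ‖Φ(Σ̂) - Σ‖₂ ≤ 2‖Σ̂ - Σ‖₂. -/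
/-!
Split Φ(Σ̂) - Σ = (Φ(Σ̂) - Σ̂) + (Σ̂ - Σ). The first term is (1 - α*)(μI - Σ̂), and
‖μI - Σ̂‖ = maxᵢ |μ - ŷᵢ| ≤ μ - ŷ₁ because μ ≥ (ŷ₁ + ŷ_p)/2, so its norm is at most (ε - ŷ₁)₊.
Weyl's inequality γ₁ ≤ ŷ₁ + ‖Σ̂ - Σ‖ together with ε < γ₁ bounds this by ‖Σ̂ - Σ‖.
-/

open Matrix
open scoped Matrix.Norms.L2Operator MatrixOrder

namespace Matrix.IsHermitian
variable {n 𝕜 : Type*} [Fintype n] [DecidableEq n] [RCLike 𝕜] {A B : Matrix n n 𝕜}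

lemma l2_opNorm_cfc (hA : A.IsHermitian) (f : ℝ → ℝ) :
    ‖cfc f A‖ = ‖f ∘ hA.eigenvalues‖ := by
  rw [hA.cfc_eq, IsHermitian.cfc, Unitary.conjStarAlgAut_apply,
    CStarRing.norm_mul_mem_unitary _ (Unitary.star_mem (SetLike.coe_mem _)),
    CStarRing.norm_coe_unitary_mul, l2_opNorm_diagonal]
  simp [Pi.norm_def]

lemma algebraMap_le_iff_le_iInf_eigenvalues [Nonempty n] (hA : A.IsHermitian) {c : ℝ} :
    algebraMap ℝ (Matrix n n 𝕜) c ≤ A ↔ c ≤ ⨅ i, hA.eigenvalues i := by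
  rw [algebraMap_le_iff_le_spectrum hA.isSelfAdjoint, hA.spectrum_real_eq_range_eigenvalues,
    Set.forall_mem_range, le_ciInf_iff (Finite.bddBelow_range _)]

lemma l2_opNorm_eq_norm_eigenvalues (hA : A.IsHermitian) : ‖A‖ = ‖hA.eigenvalues‖ := by
  simpa only [cfc_id ℝ A, Function.id_comp] using hA.l2_opNorm_cfc id

lemma neg_algebraMap_norm_le (hA : A.IsHermitian) : algebraMap ℝ (Matrix n n 𝕜) (-‖A‖) ≤ A := by
  rw [algebraMap_le_iff_le_spectrum hA.isSelfAdjoint, hA.spectrum_real_eq_range_eigenvalues,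
    Set.forall_mem_range, hA.l2_opNorm_eq_norm_eigenvalues]
  exact fun i ↦ neg_le_of_abs_le (norm_le_pi_norm hA.eigenvalues i)

lemma iInf_eigenvalues_le_add_norm_sub [Nonempty n] (hA : A.IsHermitian) (hB : B.IsHermitian) :
    ⨅ i, hA.eigenvalues i ≤ (⨅ i, hB.eigenvalues i) + ‖B - A‖ := by
  rw [← sub_le_iff_le_add, ← hB.algebraMap_le_iff_le_iInf_eigenvalues]
  have := add_le_add ((hA.algebraMap_le_iff_le_iInf_eigenvalues).2 le_rfl)
    (hB.sub hA).neg_algebraMap_norm_le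
  simpa [sub_eq_add_neg] using this

lemma norm_algebraMap_sub_le [Nonempty n] (hA : A.IsHermitian) {μ : ℝ}
    (hμ : ((⨅ i, hA.eigenvalues i) + ⨆ i, hA.eigenvalues i) / 2 ≤ μ) :
    ‖algebraMap ℝ (Matrix n n 𝕜) μ - A‖ ≤ μ - ⨅ i, hA.eigenvalues i := by
  have hcfc : cfc (fun x ↦ μ - x) A = algebraMap ℝ _ μ - A := by
    rw [cfc_sub .., cfc_const .., cfc_id' ..]
  have hlow (i : n) : ⨅ j, hA.eigenvalues j ≤ hA.eigenvalues i :=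
    ciInf_le (Finite.bddBelow_range _) i
  have hup (i : n) : hA.eigenvalues i ≤ ⨆ j, hA.eigenvalues j :=
    le_ciSup (Finite.bddAbove_range _) i
  rw [← hcfc, hA.l2_opNorm_cfc]
  obtain ⟨i⟩ := ‹Nonempty n›
  refine pi_norm_le_iff_of_nonneg (by linarith [hlow i, hup i]) |>.2 fun j ↦ ?_
  rw [Function.comp_apply, Real.norm_eq_abs, abs_le]
  constructor <;> linarith [hlow j, hup j]

lemma norm_shrink_sub_le [Nonempty n] (hA : A.IsHermitian) {ε μ α : ℝ}
    (hμ : ((⨅ i, hA.eigenvalues i) + ⨆ i, hA.eigenvalues i) / 2 ≤ μ) (hεμ : ε ≤ μ)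
    (hα : α = if ε ≤ ⨅ i, hA.eigenvalues i then 1 else (μ - ε) / (μ - ⨅ i, hA.eigenvalues i)) :
    ‖α • A + ((1 - α) * μ) • (1 : Matrix n n 𝕜) - A‖ ≤ max (ε - ⨅ i, hA.eigenvalues i) 0 := by
  have hnorm := hA.norm_algebraMap_sub_le hμ
  set y₁ := ⨅ i, hA.eigenvalues i
  rw [show α • A + ((1 - α) * μ) • 1 - A = (1 - α) • (algebraMap ℝ _ μ - A) by
    rw [Algebra.algebraMap_eq_smul_one]; module, RCLike.real_smul_eq_coe_smul (K := 𝕜), norm_smul,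
    RCLike.norm_ofReal]
  split_ifs at hα with hεy
  · simp [hα]
  have hgap : 0 < μ - y₁ := by linarith
  have hcoef : 1 - α = (ε - y₁) / (μ - y₁) := by rw [hα]; field_simp; ring
  have hcoef_nonneg : 0 ≤ (ε - y₁) / (μ - y₁) := div_nonneg (by linarith) hgap.le
  calc |1 - α| * ‖algebraMap ℝ _ μ - A‖ ≤ (ε - y₁) / (μ - y₁) * (μ - y₁) := by
        rw [hcoef, abs_of_nonneg hcoef_nonneg]; exact mul_le_mul_of_nonneg_left hnorm hcoef_nonneg
    _ ≤ max (ε - y₁) 0 := by rw [div_mul_cancel₀ _ hgap.ne']; exact le_max_left _ _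

end Matrix.IsHermitian

theorem fspd_spectral_rate_general (n : ℕ)
    (Sig Shat : Matrix (Fin (n + 1)) (Fin (n + 1)) ℝ)
    (hSig : Sig.IsHermitian) (hShat : Shat.IsHermitian)
    (ε μ y1 yp α : ℝ) (hε1 : ε < ⨅ i, hSig.eigenvalues i)
    (hy1 : y1 = ⨅ i, hShat.eigenvalues i) (hyp : yp = ⨆ i, hShat.eigenvalues i)
    (hμ : max ε ((y1 + yp) / 2) ≤ μ)
    (hα : α = if ε ≤ y1 then 1 else (μ - ε) / (μ - y1)) :
    ‖(α • Shat + ((1 - α) * μ) • (1 : Matrix (Fin (n + 1)) (Fin (n + 1)) ℝ)) - Sig‖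
      ≤ 2 * ‖Shat - Sig‖ := by
  subst hy1 hyp
  obtain ⟨hεμ, hmid⟩ := max_le_iff.mp hμ
  have hweyl : ε - ⨅ i, hShat.eigenvalues i ≤ ‖Shat - Sig‖ := by
    linarith [hSig.iInf_eigenvalues_le_add_norm_sub hShat]
  calc ‖α • Shat + ((1 - α) * μ) • (1 : Matrix (Fin (n + 1)) (Fin (n + 1)) ℝ) - Sig‖
      = ‖(α • Shat + ((1 - α) * μ) • 1 - Shat) + (Shat - Sig)‖ := by rw [sub_add_sub_cancel]
    _ ≤ ‖α • Shat + ((1 - α) * μ) • 1 - Shat‖ + ‖Shat - Sig‖ := norm_add_le _ _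
    _ ≤ max (ε - ⨅ i, hShat.eigenvalues i) 0 + ‖Shat - Sig‖ := by
      gcongr; exact hShat.norm_shrink_sub_le hmid hεμ hα
    _ ≤ 2 * ‖Shat - Sig‖ := by linarith [max_le hweyl (norm_nonneg (Shat - Sig))]

/-- Theorem 2 of the paper: with γ₁(Σ) > ε > 0, the FSPD update
Φ(Σ̂) = α*Σ̂ + (1-α*)μI (α* = 1 if ŷ₁ ≥ ε, else (μ-ε)/(μ-ŷ₁); μ ≥ max(ε,(ŷ₁+ŷ_p)/2))
satisfies ‖Φ(Σ̂) - Σ‖₂ ≤ 2‖Σ̂ - Σ‖₂. -/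
theorem fspd_spectral_rate (n : ℕ)
    (Sig Shat : Matrix (Fin (n + 1)) (Fin (n + 1)) ℝ)
    (hSig : Sig.IsHermitian) (hShat : Shat.IsHermitian)
    (ε μ y1 yp α : ℝ) (hε0 : 0 < ε) (hε1 : ε < ⨅ i, hSig.eigenvalues i)
    (hy1 : y1 = ⨅ i, hShat.eigenvalues i) (hyp : yp = ⨆ i, hShat.eigenvalues i)
    (hμ : max ε ((y1 + yp) / 2) ≤ μ)
    (hα : α = if ε ≤ y1 then 1 else (μ - ε) / (μ - y1)) :
    ‖(α • Shat + ((1 - α) * μ) • (1 : Matrix (Fin (n + 1)) (Fin (n + 1)) ℝ)) - Sig‖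
      ≤ 2 * ‖Shat - Sig‖ :=
  fspd_spectral_rate_general n Sig Shat hSig hShat ε μ y1 yp α hε1 hy1 hyp hμ hα
end

section
/- Let Σ̂ and Σ be p×p real symmetric matrices with ordered eigenvalues ŷᵢ and γᵢ, let 0 < ε ≤ γ₁, and suppose |ŷ₁ - γ₁| ≤ C·√(Σᵢ(ŷᵢ - γᵢ)²/p) for a constant C ≥ 0. Then with Φ as in the FSPD procedure (α* = (μ-ε)/(μ-ŷ₁) when ŷ₁ < ε, α*=1 otherwise, μ ≥ max(ε,(ŷ₁+ŷ_p)/2)), ‖Φ(Σ̂) - Σ‖_F ≤ (1 + C)·‖Σ̂ - Σ‖_F, where ‖·‖_F is the scaled Frobenius norm. -/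
/-!
Split `Φ(Σ̂) - Σ = (Φ(Σ̂) - Σ̂) + (Σ̂ - Σ)`. The first summand is an affine function of `Σ̂`, with
eigenvalues `(1 - α)(μ - ŷᵢ)`; the choice of `μ` and `α` keeps all of them in absolute value below
`(ε - ŷ₁)₊ ≤ |ŷ₁ - γ₁|`, which the hypothesis bounds by `C` times the root-mean-square eigenvalue
gap. By the Hoffman–Wielandt inequality that gap is at most `‖Σ̂ - Σ‖_F`; Hoffman–Wielandt in turn
comes from writing `tr(AB) = ∑ᵢⱼ Sᵢⱼ λᵢ(A) λⱼ(B)` with `S` doubly stochastic (the squared entries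
of the orthogonal matrix relating the two eigenbases), reducing to permutation matrices by
Birkhoff's theorem, and applying the rearrangement inequality.
-/

open Matrix

/-- Scaled Frobenius norm ‖A‖_F = √(tr(AᵀA)/p). -/
noncomputable def frobSc {p : ℕ} (A : Matrix (Fin p) (Fin p) ℝ) : ℝ :=
  Real.sqrt (Matrix.trace (Aᵀ * A) / p)

open Unitary

namespace Matrix

variable {n : Type*} [Fintype n] [DecidableEq n]

lemma trace_conjStarAlgAut {R : Type*} [CommRing R] [StarRing R] (U : unitaryGroup n R)
    (M : Matrix n n R) : trace (conjStarAlgAut R _ U M) = trace M := by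
  rw [conjStarAlgAut_apply, trace_mul_cycle, Unitary.coe_star_mul_self, one_mul]

lemma IsHermitian.eq_conjStarAlgAut_diagonal {A : Matrix n n ℝ} (hA : A.IsHermitian) :
    A = conjStarAlgAut ℝ _ hA.eigenvectorUnitary (diagonal hA.eigenvalues) := by
  simpa using hA.spectral_theorem

lemma IsHermitian.smul_add_smul_one_eq {A : Matrix n n ℝ} (hA : A.IsHermitian) (a b : ℝ) :
    a • A + b • 1 = conjStarAlgAut ℝ _ hA.eigenvectorUnitary
      (diagonal fun i => a * hA.eigenvalues i + b) := by
  conv_lhs => rw [hA.eq_conjStarAlgAut_diagonal]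
  rw [← map_smul, ← map_one (conjStarAlgAut ℝ _ hA.eigenvectorUnitary), ← map_smul, ← map_add]
  congr 1
  ext i j
  by_cases h : i = j <;> simp [diagonal, h]

lemma trace_transpose_mul_self_diagonal (d : n → ℝ) :
    trace ((diagonal d)ᵀ * diagonal d) = ∑ i, d i ^ 2 := by
  simp [diagonal_transpose, trace_diagonal, sq]

lemma trace_transpose_mul_self_conjStarAlgAut (U : unitaryGroup n ℝ) (M : Matrix n n ℝ) :
    trace ((conjStarAlgAut ℝ _ U M)ᵀ * conjStarAlgAut ℝ _ U M) = trace (Mᵀ * M) := by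
  simp only [← conjTranspose_eq_transpose_of_trivial, ← star_eq_conjTranspose, ← map_star,
    ← map_mul, trace_conjStarAlgAut]

lemma IsHermitian.trace_transpose_mul_self_smul_add_smul_one {A : Matrix n n ℝ}
    (hA : A.IsHermitian) (a b : ℝ) :
    trace ((a • A + b • 1)ᵀ * (a • A + b • 1)) = ∑ i, (a * hA.eigenvalues i + b) ^ 2 := by
  rw [hA.smul_add_smul_one_eq, trace_transpose_mul_self_conjStarAlgAut,
    trace_transpose_mul_self_diagonal]

lemma IsHermitian.trace_mul_self_s15 {A : Matrix n n ℝ} (hA : A.IsHermitian) :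
    trace (A * A) = ∑ i, hA.eigenvalues i ^ 2 := by
  simpa [← conjTranspose_eq_transpose_of_trivial, hA.eq] using
    hA.trace_transpose_mul_self_smul_add_smul_one 1 0

lemma of_sq_mem_doublyStochastic {W : Matrix n n ℝ} (hW : W ∈ unitaryGroup n ℝ) :
    of (fun i j => W i j ^ 2) ∈ doublyStochastic ℝ n := by
  have hrow i := congr_fun₂ (mem_unitaryGroup_iff.mp hW) i i
  have hcol j := congr_fun₂ (mem_unitaryGroup_iff'.mp hW) j j
  simp only [mul_apply, star_apply, star_trivial, one_apply_eq] at hrow hcol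
  refine mem_doublyStochastic_iff_sum.mpr ⟨fun i j => sq_nonneg _, fun i => ?_, fun j => ?_⟩
  · simpa [sq] using hrow i
  · simpa [sq, mul_comm] using hcol j

lemma submatrix_mem_doublyStochastic {S : Matrix n n ℝ} (hS : S ∈ doublyStochastic ℝ n)
    (σ τ : Equiv.Perm n) : S.submatrix σ τ ∈ doublyStochastic ℝ n := by
  rw [mem_doublyStochastic_iff_sum] at hS ⊢
  obtain ⟨hnonneg, hrow, hcol⟩ := hS
  exact ⟨fun i j => hnonneg _ _, fun i => by simpa [Equiv.sum_comp τ (S (σ i))] using hrow (σ i),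
    fun j => by simpa [Equiv.sum_comp σ (fun i => S i (τ j))] using hcol (τ j)⟩

lemma IsHermitian.exists_mem_doublyStochastic_trace_mul_eq_s15 {A B : Matrix n n ℝ}
    (hA : A.IsHermitian) (hB : B.IsHermitian) :
    ∃ S ∈ doublyStochastic ℝ n,
      trace (A * B) = ∑ i, ∑ j, S i j * (hA.eigenvalues i * hB.eigenvalues j) := by
  set W := star hA.eigenvectorUnitary * hB.eigenvectorUnitary
  refine ⟨of fun i j => (W : Matrix n n ℝ) i j ^ 2, of_sq_mem_doublyStochastic W.2, ?_⟩
  have hB' : conjStarAlgAut ℝ _ (star hA.eigenvectorUnitary) B =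
      conjStarAlgAut ℝ _ W (diagonal hB.eigenvalues) := by
    rw [conjStarAlgAut_mul_apply, ← hB.eq_conjStarAlgAut_diagonal]
  have hA' : conjStarAlgAut ℝ _ (star hA.eigenvectorUnitary) A = diagonal hA.eigenvalues := by
    simpa using hA.conjStarAlgAut_star_eigenvectorUnitary
  rw [← trace_conjStarAlgAut (star hA.eigenvectorUnitary), map_mul, hA', hB', trace]
  refine Finset.sum_congr rfl fun i _ => ?_
  rw [diag_apply, diagonal_mul, conjStarAlgAut_apply, mul_apply, Finset.mul_sum]
  refine Finset.sum_congr rfl fun j _ => ?_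
  rw [mul_diagonal, star_apply, star_trivial, of_apply]
  ring

lemma sum_mul_mul_le_of_mem_doublyStochastic {ι : Type*} [Fintype ι] [DecidableEq ι]
    {S : Matrix ι ι ℝ} (hS : S ∈ doublyStochastic ℝ ι) {f g : ι → ℝ} (hfg : Monovary f g) :
    ∑ i, ∑ j, S i j * (f i * g j) ≤ ∑ i, f i * g i := by
  let L : Matrix ι ι ℝ →ₗ[ℝ] ℝ :=
    { toFun := fun S => ∑ i, ∑ j, S i j * (f i * g j)
      map_add' := fun S T => by simp [add_mul, Finset.sum_add_distrib]
      map_smul' := fun c S => by simp [Finset.mul_sum, mul_assoc] }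
  rw [← SetLike.mem_coe, doublyStochastic_eq_convexHull_permMatrix] at hS
  obtain ⟨_, ⟨σ, rfl⟩, hle⟩ :=
    (L.convexOn convex_univ).exists_ge_of_mem_convexHull (Set.subset_univ _) hS
  refine hle.trans (le_of_eq_of_le ?_ (hfg.sum_mul_comp_perm_le_sum_mul (σ := σ)))
  refine Finset.sum_congr rfl fun i _ => ?_
  simp [Equiv.Perm.permMatrix, PEquiv.toMatrix_apply]

lemma IsHermitian.trace_mul_le_sum_mul_of_monovary {A B : Matrix n n ℝ}
    (hA : A.IsHermitian) (hB : B.IsHermitian) {σ τ : Equiv.Perm n}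
    (h : Monovary (hA.eigenvalues ∘ σ) (hB.eigenvalues ∘ τ)) :
    trace (A * B) ≤ ∑ i, hA.eigenvalues (σ i) * hB.eigenvalues (τ i) := by
  obtain ⟨S, hS, htr⟩ := hA.exists_mem_doublyStochastic_trace_mul_eq_s15 hB
  calc trace (A * B)
      = ∑ i, ∑ j, S.submatrix σ τ i j *
          ((hA.eigenvalues ∘ σ) i * (hB.eigenvalues ∘ τ) j) := by
        rw [htr, ← Equiv.sum_comp σ]
        exact Finset.sum_congr rfl fun i _ => (Equiv.sum_comp τ _).symm
    _ ≤ _ := sum_mul_mul_le_of_mem_doublyStochastic (submatrix_mem_doublyStochastic hS σ τ) h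

theorem IsHermitian.sum_sq_sub_le_trace {A B : Matrix n n ℝ}
    (hA : A.IsHermitian) (hB : B.IsHermitian) {σ τ : Equiv.Perm n}
    (h : Monovary (hA.eigenvalues ∘ σ) (hB.eigenvalues ∘ τ)) :
    ∑ i, (hA.eigenvalues (σ i) - hB.eigenvalues (τ i)) ^ 2 ≤ trace ((A - B)ᵀ * (A - B)) := by
  have htrace :
      trace ((A - B)ᵀ * (A - B)) = trace (A * A) + trace (B * B) - 2 * trace (A * B) := by
    rw [transpose_sub, ← conjTranspose_eq_transpose_of_trivial, hA.eq,
      ← conjTranspose_eq_transpose_of_trivial, hB.eq, sub_mul, mul_sub, mul_sub, trace_sub,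
      trace_sub, trace_sub, trace_mul_comm B A]
    ring
  have hsum : ∑ i, (hA.eigenvalues (σ i) - hB.eigenvalues (τ i)) ^ 2 =
      ∑ i, hA.eigenvalues (σ i) ^ 2 + ∑ i, hB.eigenvalues (τ i) ^ 2 -
        2 * ∑ i, hA.eigenvalues (σ i) * hB.eigenvalues (τ i) := by
    simp only [sub_sq, Finset.sum_add_distrib, Finset.sum_sub_distrib, Finset.mul_sum, mul_assoc]
    ring
  rw [htrace, hsum, hA.trace_mul_self_s15, hB.trace_mul_self_s15,
    Equiv.sum_comp σ (hA.eigenvalues · ^ 2), Equiv.sum_comp τ (hB.eigenvalues · ^ 2)]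
  linarith [hA.trace_mul_le_sum_mul_of_monovary hB h]

end Matrix

section
attribute [local instance] Matrix.frobeniusNormedAddCommGroup

lemma frobSc_eq_norm_div {p : ℕ} (A : Matrix (Fin p) (Fin p) ℝ) :
    frobSc A = ‖A‖ / Real.sqrt p := by
  have htr : trace (Aᵀ * A) = ∑ i, ∑ j, A i j ^ 2 := by
    rw [trace, Finset.sum_comm]
    simp [mul_apply, sq]
  rw [frobSc, Real.sqrt_div' _ (Nat.cast_nonneg p), htr, frobenius_norm_def, Real.sqrt_eq_rpow]
  simp

lemma frobSc_add_le {p : ℕ} (A B : Matrix (Fin p) (Fin p) ℝ) :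
    frobSc (A + B) ≤ frobSc A + frobSc B := by
  simp only [frobSc_eq_norm_div, ← add_div]
  gcongr
  exact norm_add_le A B

end

lemma Matrix.IsHermitian.frobSc_smul_add_smul_one_le {p : ℕ} {A : Matrix (Fin p) (Fin p) ℝ}
    (hA : A.IsHermitian) {a b c : ℝ} (hc : 0 ≤ c) (h : ∀ i, |a * hA.eigenvalues i + b| ≤ c) :
    frobSc (a • A + b • 1) ≤ c := by
  rw [frobSc, hA.trace_transpose_mul_self_smul_add_smul_one, Real.sqrt_le_left hc]
  refine div_le_of_le_mul₀ (Nat.cast_nonneg p) (sq_nonneg c) ?_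
  calc ∑ i, (a * hA.eigenvalues i + b) ^ 2
      ≤ ∑ _i : Fin p, c ^ 2 :=
        Finset.sum_le_sum fun i _ => sq_le_sq' (abs_le.mp (h i)).1 (abs_le.mp (h i)).2
    _ = c ^ 2 * p := by simp [mul_comm]

lemma abs_one_sub_mul_sub_le_of_fspd {ε μ α a b t : ℝ} (hμ : max ε ((a + b) / 2) ≤ μ)
    (hα : α = if ε ≤ a then 1 else (μ - ε) / (μ - a)) (hat : a ≤ t) (htb : t ≤ b) :
    |(1 - α) * (μ - t)| ≤ max (ε - a) 0 := by
  obtain ⟨hεμ, hmid⟩ := max_le_iff.mp hμ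
  split_ifs at hα with hεa
  · simp [hα]
  · rw [not_le] at hεa
    have hμa : 0 < μ - a := by linarith
    have hshrink : 1 - α = (ε - a) / (μ - a) := by
      rw [hα]
      field_simp
      ring
    rw [hshrink, abs_mul, abs_of_nonneg (div_nonneg (by linarith) hμa.le),
      max_eq_left (by linarith)]
    calc (ε - a) / (μ - a) * |μ - t| ≤ (ε - a) / (μ - a) * (μ - a) := by
          gcongr
          exact abs_le.mpr ⟨by linarith, by linarith⟩
      _ = ε - a := div_mul_cancel₀ _ hμa.ne'

lemma Matrix.IsHermitian.frobSc_fspd_sub_le {p : ℕ} {A : Matrix (Fin p) (Fin p) ℝ}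
    (hA : A.IsHermitian) {ε μ α a b : ℝ} (hspec : ∀ i, hA.eigenvalues i ∈ Set.Icc a b)
    (hμ : max ε ((a + b) / 2) ≤ μ) (hα : α = if ε ≤ a then 1 else (μ - ε) / (μ - a)) :
    frobSc ((α • A + ((1 - α) * μ) • 1) - A) ≤ max (ε - a) 0 := by
  have hshift : (α • A + ((1 - α) * μ) • 1) - A = (α - 1) • A + ((1 - α) * μ) • 1 := by module
  rw [hshift]
  refine hA.frobSc_smul_add_smul_one_le (le_max_right _ _) fun i => ?_
  convert abs_one_sub_mul_sub_le_of_fspd hμ hα (hspec i).1 (hspec i).2 using 2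
  ring

theorem fspd_frobenius_rate_general (n : ℕ)
    (Sig Shat : Matrix (Fin (n + 1)) (Fin (n + 1)) ℝ)
    (hSig : Sig.IsHermitian) (hShat : Shat.IsHermitian)
    (g y : Fin (n + 1) → ℝ) (hmonog : Monotone g) (hmonoy : Monotone y)
    (hpermg : ∃ σ : Equiv.Perm (Fin (n + 1)), g = hSig.eigenvalues ∘ σ)
    (hpermy : ∃ σ : Equiv.Perm (Fin (n + 1)), y = hShat.eigenvalues ∘ σ)
    (ε μ α C : ℝ) (hε1 : ε ≤ g 0) (hC : 0 ≤ C)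
    (hA2 : |y 0 - g 0| ≤ C * Real.sqrt ((∑ i, (y i - g i) ^ 2) / (n + 1)))
    (hμ : max ε ((y 0 + y (Fin.last n)) / 2) ≤ μ)
    (hα : α = if ε ≤ y 0 then 1 else (μ - ε) / (μ - y 0)) :
    frobSc ((α • Shat + ((1 - α) * μ) • (1 : Matrix (Fin (n + 1)) (Fin (n + 1)) ℝ)) - Sig)
      ≤ (1 + C) * frobSc (Shat - Sig) := by
  obtain ⟨σg, hg⟩ := hpermg
  obtain ⟨σy, hy⟩ := hpermy
  have hhoffman : Real.sqrt ((∑ i, (y i - g i) ^ 2) / (n + 1)) ≤ frobSc (Shat - Sig) := by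
    have hmonovary : Monovary (hShat.eigenvalues ∘ σy) (hSig.eigenvalues ∘ σg) := by
      rw [← hy, ← hg]
      exact hmonoy.monovary hmonog
    rw [frobSc, Nat.cast_add_one]
    gcongr
    simpa [hy, hg] using hShat.sum_sq_sub_le_trace hSig hmonovary
  have hspec : ∀ i, hShat.eigenvalues i ∈ Set.Icc (y 0) (y (Fin.last n)) := fun i => by
    have hi : hShat.eigenvalues i = y (σy.symm i) := by simp [hy]
    exact hi ▸ ⟨hmonoy (Fin.zero_le _), hmonoy (Fin.le_last _)⟩
  have hshrink_le : max (ε - y 0) 0 ≤ C * frobSc (Shat - Sig) :=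
    calc max (ε - y 0) 0 ≤ |y 0 - g 0| :=
          max_le (by rw [abs_sub_comm]; exact (sub_le_sub_right hε1 _).trans (le_abs_self _))
            (abs_nonneg _)
      _ ≤ C * frobSc (Shat - Sig) := hA2.trans (by gcongr)
  calc _ ≤ frobSc ((α • Shat + ((1 - α) * μ) • 1) - Shat) + frobSc (Shat - Sig) := by
        rw [← sub_add_sub_cancel _ Shat Sig]
        exact frobSc_add_le _ _
    _ ≤ C * frobSc (Shat - Sig) + frobSc (Shat - Sig) := by
        gcongr
        exact (hShat.frobSc_fspd_sub_le hspec hμ hα).trans hshrink_le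
    _ = (1 + C) * frobSc (Shat - Sig) := by ring

/-- Theorem 3 of the paper, quantitative form: if 0 < ε ≤ γ₁ and
|ŷ₁ - γ₁| ≤ C√(Σᵢ(ŷᵢ-γᵢ)²/p), then the FSPD update satisfies
‖Φ(Σ̂) - Σ‖_F ≤ (1+C)‖Σ̂ - Σ‖_F in the scaled Frobenius norm. -/
theorem fspd_frobenius_rate (n : ℕ)
    (Sig Shat : Matrix (Fin (n + 1)) (Fin (n + 1)) ℝ)
    (hSig : Sig.IsHermitian) (hShat : Shat.IsHermitian)
    (g y : Fin (n + 1) → ℝ) (hmonog : Monotone g) (hmonoy : Monotone y)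
    (hpermg : ∃ σ : Equiv.Perm (Fin (n + 1)), g = hSig.eigenvalues ∘ σ)
    (hpermy : ∃ σ : Equiv.Perm (Fin (n + 1)), y = hShat.eigenvalues ∘ σ)
    (ε μ α C : ℝ) (hε0 : 0 < ε) (hε1 : ε ≤ g 0) (hC : 0 ≤ C)
    (hA2 : |y 0 - g 0| ≤ C * Real.sqrt ((∑ i, (y i - g i) ^ 2) / (n + 1)))
    (hμ : max ε ((y 0 + y (Fin.last n)) / 2) ≤ μ)
    (hα : α = if ε ≤ y 0 then 1 else (μ - ε) / (μ - y 0)) :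
    frobSc ((α • Shat + ((1 - α) * μ) • (1 : Matrix (Fin (n + 1)) (Fin (n + 1)) ℝ)) - Sig)
      ≤ (1 + C) * frobSc (Shat - Sig) :=
  fspd_frobenius_rate_general n Sig Shat hSig hShat g y hmonog hmonoy hpermg hpermy ε μ α C hε1 hC
    hA2 hμ hα
end
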